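/- arXiv:2603.23926 — 2 statements merged into one kernel-verified Lean document; each statement's English description precedes it below -/
import Mathlib

section
/- Let Ω be a nonempty finite set, let p and q be probability vectors on Ω, let u, m > 0 and H ≥ 0, and let Γ = #{ω ∈ Ω : p(ω) > 0}. Suppose |q(ω) − p(ω)| ≤ √(2p(ω)u/m) + 𝟙[p(ω)>0]·u/(3m) for every ω ∈ Ω. Then for every D : Ω → ℝ with max_ω D(ω) − min_ω D(ω) ≤ 2H, one has (q − p)·D = ∑_ω (q(ω) − p(ω))·D(ω) ≤ √(2Γ·u·𝕍(p,D)/m) + 2ΓHu/(3m). -/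
open Finset

/-- Dot product of a vector `p` with a value vector `v` on a finite set. -/
noncomputable def probDot {Ω : Type*} [Fintype Ω] (p v : Ω → ℝ) : ℝ :=
  ∑ ω, p ω * v ω

/-- Variance of `v` under the probability vector `p`. -/
noncomputable def probVar {Ω : Type*} [Fintype Ω] (p v : Ω → ℝ) : ℝ :=
  (∑ ω, p ω * (v ω) ^ 2) - (probDot p v) ^ 2

/-- If `q` is entrywise close to `p` in the Bernstein sense, then for every
`D` of span at most `2H`, `(q − p)·D ≤ √(2Γu𝕍(p,D)/m) + 2ΓHu/(3m)`, where
`Γ` is the support size of `p`. -/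
theorem model_error_crossterm_bound
    {Ω : Type*} [Fintype Ω] [Nonempty Ω]
    (p q : Ω → ℝ)
    (hpnonneg : ∀ ω, 0 ≤ p ω) (hple : ∀ ω, p ω ≤ 1) (hpsum : ∑ ω, p ω = 1)
    (hqnonneg : ∀ ω, 0 ≤ q ω) (hqle : ∀ ω, q ω ≤ 1) (hqsum : ∑ ω, q ω = 1)
    (u m H : ℝ) (hu : 0 < u) (hm : 0 < m) (hH : 0 ≤ H)
    (hclose : ∀ ω, |q ω - p ω|
      ≤ Real.sqrt (2 * p ω * u / m) + (if 0 < p ω then 1 else 0) * u / (3 * m))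
    (D : Ω → ℝ)
    (hspan : Finset.univ.sup' Finset.univ_nonempty D
        - Finset.univ.inf' Finset.univ_nonempty D ≤ 2 * H) :
    ∑ ω, (q ω - p ω) * D ω
      ≤ Real.sqrt (2 * (Finset.univ.filter (fun ω => 0 < p ω)).card * u
            * probVar p D / m)
        + 2 * (Finset.univ.filter (fun ω => 0 < p ω)).card * H * u / (3 * m) := by
  classical
  set c := probDot p D with hc
  set V := probVar p D with hV
  set Γ : ℕ := (Finset.univ.filter (fun ω => 0 < p ω)).card with hΓ
  have hsup : ∀ ω, D ω ≤ Finset.univ.sup' Finset.univ_nonempty D :=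
    fun ω => Finset.le_sup' D (mem_univ ω)
  have hinf : ∀ ω, Finset.univ.inf' Finset.univ_nonempty D ≤ D ω :=
    fun ω => Finset.inf'_le D (mem_univ ω)
  have hc_le : c ≤ Finset.univ.sup' Finset.univ_nonempty D := by
    calc c = ∑ ω, p ω * D ω := rfl
    _ ≤ ∑ ω, p ω * Finset.univ.sup' Finset.univ_nonempty D :=
        Finset.sum_le_sum (fun ω _ => mul_le_mul_of_nonneg_left (hsup ω) (hpnonneg ω))
    _ = Finset.univ.sup' Finset.univ_nonempty D := by
        rw [← Finset.sum_mul, hpsum, one_mul]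
  have hc_ge : Finset.univ.inf' Finset.univ_nonempty D ≤ c := by
    calc Finset.univ.inf' Finset.univ_nonempty D
        = ∑ ω, p ω * Finset.univ.inf' Finset.univ_nonempty D := by
          rw [← Finset.sum_mul, hpsum, one_mul]
    _ ≤ ∑ ω, p ω * D ω :=
        Finset.sum_le_sum (fun ω _ => mul_le_mul_of_nonneg_left (hinf ω) (hpnonneg ω))
    _ = c := rfl
  have hDc : ∀ ω, |D ω - c| ≤ 2 * H := by
    intro ω
    rw [abs_le]
    constructor
    · linarith [hinf ω, hc_le]
    · linarith [hsup ω, hc_ge]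
  have hVar : ∑ ω, p ω * (D ω - c) ^ 2 = V := by
    have h1 : ∀ ω : Ω, p ω * (D ω - c) ^ 2
        = p ω * (D ω) ^ 2 - 2 * c * (p ω * D ω) + c ^ 2 * p ω := fun ω => by ring
    calc ∑ ω, p ω * (D ω - c) ^ 2
        = ∑ ω, (p ω * (D ω) ^ 2 - 2 * c * (p ω * D ω) + c ^ 2 * p ω) := by
          exact Finset.sum_congr rfl (fun ω _ => h1 ω)
    _ = (∑ ω, p ω * (D ω) ^ 2) - 2 * c * (∑ ω, p ω * D ω) + c ^ 2 * (∑ ω, p ω) := by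
          rw [Finset.sum_add_distrib, Finset.sum_sub_distrib, ← Finset.mul_sum, ← Finset.mul_sum]
    _ = V := by
          rw [hpsum]
          have : (∑ ω, p ω * D ω) = c := rfl
          rw [this]
          simp [hV, probVar, ← hc]
          ring
  have hVnonneg : 0 ≤ V := by
    rw [← hVar]
    exact Finset.sum_nonneg fun ω _ => mul_nonneg (hpnonneg ω) (sq_nonneg _)
  have hzero : ∑ ω, (q ω - p ω) = 0 := by
    rw [Finset.sum_sub_distrib, hqsum, hpsum]; ring
  have key : ∑ ω, (q ω - p ω) * D ω = ∑ ω, (q ω - p ω) * (D ω - c) := by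
    simp only [mul_sub]
    rw [Finset.sum_sub_distrib, ← Finset.sum_mul, hzero, zero_mul, sub_zero]
  set S := ∑ ω, Real.sqrt (p ω) * |D ω - c| with hS
  have hSnonneg : 0 ≤ S :=
    Finset.sum_nonneg fun ω _ => mul_nonneg (Real.sqrt_nonneg _) (abs_nonneg _)
  -- Cauchy-Schwarz
  have hCS : S ^ 2 ≤ (Γ : ℝ) * V := by
    have hrw : S = ∑ ω, (if 0 < p ω then (1:ℝ) else 0) * (Real.sqrt (p ω) * |D ω - c|) := by
      refine Finset.sum_congr rfl fun ω _ => ?_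
      by_cases h : 0 < p ω
      · simp [h]
      · have : p ω = 0 := le_antisymm (not_lt.1 h) (hpnonneg ω)
        simp [h, this]
    have := Finset.sum_mul_sq_le_sq_mul_sq Finset.univ
      (fun ω => (if 0 < p ω then (1:ℝ) else 0))
      (fun ω => Real.sqrt (p ω) * |D ω - c|)
    rw [← hrw] at this
    have h1 : ∑ ω, (if 0 < p ω then (1:ℝ) else 0) ^ 2 = (Γ : ℝ) := by
      have : ∀ ω : Ω, (if 0 < p ω then (1:ℝ) else 0) ^ 2 = (if 0 < p ω then (1:ℝ) else 0) := by
        intro ω; by_cases h : 0 < p ω <;> simp [h]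
      rw [Finset.sum_congr rfl (fun ω _ => this ω)]
      simp [hΓ, Finset.sum_boole]
    have h2 : ∑ ω, (Real.sqrt (p ω) * |D ω - c|) ^ 2 = V := by
      rw [← hVar]
      refine Finset.sum_congr rfl fun ω _ => ?_
      rw [mul_pow, Real.sq_sqrt (hpnonneg ω), sq_abs]
    rw [h1, h2] at this
    exact this
  have hSle : S ≤ Real.sqrt ((Γ : ℝ) * V) := by
    have := Real.sqrt_le_sqrt hCS
    rwa [Real.sqrt_sq hSnonneg] at this
  have h2um : (0:ℝ) ≤ 2 * u / m := by positivity
  -- main chain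
  calc ∑ ω, (q ω - p ω) * D ω
      = ∑ ω, (q ω - p ω) * (D ω - c) := key
  _ ≤ ∑ ω, |q ω - p ω| * |D ω - c| := by
      refine Finset.sum_le_sum fun ω _ => ?_
      rw [← abs_mul]
      exact le_abs_self _
  _ ≤ ∑ ω, (Real.sqrt (2 * p ω * u / m) + (if 0 < p ω then 1 else 0) * u / (3 * m))
        * |D ω - c| := by
      refine Finset.sum_le_sum fun ω _ => ?_
      exact mul_le_mul_of_nonneg_right (hclose ω) (abs_nonneg _)
  _ = (∑ ω, Real.sqrt (2 * p ω * u / m) * |D ω - c|)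
      + ∑ ω, (if 0 < p ω then 1 else 0) * u / (3 * m) * |D ω - c| := by
      rw [← Finset.sum_add_distrib]
      refine Finset.sum_congr rfl fun ω _ => ?_
      ring
  _ ≤ Real.sqrt (2 * (Γ : ℝ) * u * V / m) + 2 * (Γ : ℝ) * H * u / (3 * m) := by
      have hA : (∑ ω, Real.sqrt (2 * p ω * u / m) * |D ω - c|)
          ≤ Real.sqrt (2 * (Γ : ℝ) * u * V / m) := by
        have hrw : ∀ ω : Ω, Real.sqrt (2 * p ω * u / m)
            = Real.sqrt (2 * u / m) * Real.sqrt (p ω) := by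
          intro ω
          rw [← Real.sqrt_mul h2um]
          congr 1
          field_simp
        calc (∑ ω, Real.sqrt (2 * p ω * u / m) * |D ω - c|)
            = Real.sqrt (2 * u / m) * S := by
              rw [hS, Finset.mul_sum]
              refine Finset.sum_congr rfl fun ω _ => ?_
              rw [hrw ω]; ring
        _ ≤ Real.sqrt (2 * u / m) * Real.sqrt ((Γ : ℝ) * V) :=
              mul_le_mul_of_nonneg_left hSle (Real.sqrt_nonneg _)
        _ = Real.sqrt (2 * (Γ : ℝ) * u * V / m) := by
              rw [← Real.sqrt_mul h2um]
              congr 1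
              field_simp
      have hB : (∑ ω, (if 0 < p ω then 1 else 0) * u / (3 * m) * |D ω - c|)
          ≤ 2 * (Γ : ℝ) * H * u / (3 * m) := by
        calc (∑ ω, (if 0 < p ω then 1 else 0) * u / (3 * m) * |D ω - c|)
            ≤ ∑ ω, (if 0 < p ω then 1 else 0) * u / (3 * m) * (2 * H) := by
              refine Finset.sum_le_sum fun ω _ => ?_
              refine mul_le_mul_of_nonneg_left (hDc ω) ?_
              by_cases h : 0 < p ω <;> simp [h] <;> positivity
        _ = (∑ ω, (if 0 < p ω then (1:ℝ) else 0)) * (u / (3 * m) * (2 * H)) := by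
              rw [Finset.sum_mul]
              refine Finset.sum_congr rfl fun ω _ => ?_
              ring
        _ = 2 * (Γ : ℝ) * H * u / (3 * m) := by
              rw [Finset.sum_boole]
              field_simp
              ring
      linarith
end

section
/- Let Ω be a nonempty finite set, let p and q be probability vectors on Ω, let u, m > 0 and H ≥ 0, and let Γ = #{ω ∈ Ω : p(ω) > 0}. Suppose |q(ω) − p(ω)| ≤ √(2p(ω)u/m) + 𝟙[p(ω)>0]·u/(3m) for every ω ∈ Ω. Then for every v : Ω → ℝ with max_ω v(ω) − min_ω v(ω) ≤ H, one has 𝕍(q,v) ≤ (3/2)·𝕍(p,v) + 4ΓH²u/(3m). -/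
open Finset

/-- If `q` is entrywise close to `p` in the Bernstein sense, then for every
`v` of span at most `H`, `𝕍(q,v) ≤ (3/2)𝕍(p,v) + 4ΓH²u/(3m)`, where `Γ` is
the support size of `p`. -/
theorem empirical_variance_bound
    {Ω : Type*} [Fintype Ω] [Nonempty Ω]
    (p q : Ω → ℝ)
    (hpnonneg : ∀ ω, 0 ≤ p ω) (hple : ∀ ω, p ω ≤ 1) (hpsum : ∑ ω, p ω = 1)
    (hqnonneg : ∀ ω, 0 ≤ q ω) (hqle : ∀ ω, q ω ≤ 1) (hqsum : ∑ ω, q ω = 1)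
    (u m H : ℝ) (hu : 0 < u) (hm : 0 < m) (hH : 0 ≤ H)
    (hclose : ∀ ω, |q ω - p ω|
      ≤ Real.sqrt (2 * p ω * u / m) + (if 0 < p ω then 1 else 0) * u / (3 * m))
    (v : Ω → ℝ)
    (hspan : Finset.univ.sup' Finset.univ_nonempty v
        - Finset.univ.inf' Finset.univ_nonempty v ≤ H) :
    probVar q v
      ≤ 3 / 2 * probVar p v
        + 4 * (Finset.univ.filter (fun ω => 0 < p ω)).card * H ^ 2 * u / (3 * m) := by
  classical
  set c : ℝ := probDot p v with hc
  have hcdef : c = ∑ ω, p ω * v ω := rfl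
  have hLv : ∀ ω, Finset.univ.inf' Finset.univ_nonempty v ≤ v ω :=
    fun ω => Finset.inf'_le _ (Finset.mem_univ ω)
  have hvM : ∀ ω, v ω ≤ Finset.univ.sup' Finset.univ_nonempty v :=
    fun ω => Finset.le_sup' _ (Finset.mem_univ ω)
  have hLc : Finset.univ.inf' Finset.univ_nonempty v ≤ c := by
    have h1 : ∑ ω, p ω * Finset.univ.inf' Finset.univ_nonempty v ≤ ∑ ω, p ω * v ω :=
      Finset.sum_le_sum fun ω _ => mul_le_mul_of_nonneg_left (hLv ω) (hpnonneg ω)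
    calc Finset.univ.inf' Finset.univ_nonempty v
        = ∑ ω, p ω * Finset.univ.inf' Finset.univ_nonempty v := by
          rw [← Finset.sum_mul, hpsum, one_mul]
      _ ≤ c := by rw [hcdef]; exact h1
  have hcM : c ≤ Finset.univ.sup' Finset.univ_nonempty v := by
    have h1 : ∑ ω, p ω * v ω ≤ ∑ ω, p ω * Finset.univ.sup' Finset.univ_nonempty v :=
      Finset.sum_le_sum fun ω _ => mul_le_mul_of_nonneg_left (hvM ω) (hpnonneg ω)
    calc c = ∑ ω, p ω * v ω := hcdef
      _ ≤ ∑ ω, p ω * Finset.univ.sup' Finset.univ_nonempty v := h1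
      _ = Finset.univ.sup' Finset.univ_nonempty v := by
          rw [← Finset.sum_mul, hpsum, one_mul]
  have hsq : ∀ ω, (v ω - c) ^ 2 ≤ H ^ 2 := by
    intro ω
    apply sq_le_sq'
    · linarith [hLv ω, hcM]
    · linarith [hvM ω, hLc]
  have hsqnn : ∀ ω, (0:ℝ) ≤ (v ω - c) ^ 2 := fun ω => sq_nonneg _
  have hvarp : ∑ ω, p ω * (v ω - c) ^ 2 = probVar p v := by
    have h1 : ∀ ω ∈ Finset.univ, p ω * (v ω - c) ^ 2
        = p ω * (v ω) ^ 2 - 2 * c * (p ω * v ω) + c ^ 2 * p ω := fun ω _ => by ring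
    rw [Finset.sum_congr rfl h1, Finset.sum_add_distrib, Finset.sum_sub_distrib,
      ← Finset.mul_sum, ← Finset.mul_sum, hpsum, ← hcdef]
    simp only [probVar, ← hc]
    ring
  have hvarq : probVar q v ≤ ∑ ω, q ω * (v ω - c) ^ 2 := by
    have h1 : ∀ ω ∈ Finset.univ, q ω * (v ω - c) ^ 2
        = q ω * (v ω) ^ 2 - 2 * c * (q ω * v ω) + c ^ 2 * q ω := fun ω _ => by ring
    have h2 : ∑ ω, q ω * (v ω - c) ^ 2
        = probVar q v + (probDot q v - c) ^ 2 := by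
      rw [Finset.sum_congr rfl h1, Finset.sum_add_distrib, Finset.sum_sub_distrib,
        ← Finset.mul_sum, ← Finset.mul_sum, hqsum]
      simp only [probVar, probDot]
      ring
    nlinarith [sq_nonneg (probDot q v - c)]
  have hpt : ∀ ω, (q ω - p ω) * (v ω - c) ^ 2
      ≤ 1 / 2 * (p ω * (v ω - c) ^ 2)
        + (if 0 < p ω then (1:ℝ) else 0) * (4 * H ^ 2 * u / (3 * m)) := by
    intro ω
    have hcl := hclose ω
    by_cases hp : 0 < p ω
    · rw [if_pos hp] at hcl
      rw [if_pos hp]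
      set s := Real.sqrt (2 * p ω * u / m) with hs
      have hsnn : 0 ≤ s := Real.sqrt_nonneg _
      have hs2 : s ^ 2 = 2 * p ω * u / m := Real.sq_sqrt (by positivity)
      have hkey : s ≤ p ω / 2 + u / m := by
        have hle : 2 * p ω * u / m ≤ (p ω / 2 + u / m) ^ 2 := by
          have h1 : 2 * p ω * u / m = 2 * p ω * (u / m) := by ring
          rw [h1]
          nlinarith [sq_nonneg (p ω / 2 - u / m)]
        have h := Real.sqrt_le_sqrt hle
        rwa [Real.sqrt_sq (by positivity)] at h
      have hqp : q ω - p ω ≤ s + 1 * u / (3 * m) := le_trans (le_abs_self _) hcl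
      have h1 : (q ω - p ω) * (v ω - c) ^ 2 ≤ (s + 1 * u / (3 * m)) * (v ω - c) ^ 2 :=
        mul_le_mul_of_nonneg_right hqp (hsqnn ω)
      have h2 : (s + 1 * u / (3 * m)) * (v ω - c) ^ 2
          ≤ (p ω / 2 + u / m + u / (3 * m)) * (v ω - c) ^ 2 := by
        apply mul_le_mul_of_nonneg_right _ (hsqnn ω)
        have hone : 1 * u / (3 * m) = u / (3 * m) := by ring
        linarith [hone]
      have h3 : (4 * u / (3 * m)) * (v ω - c) ^ 2 ≤ (4 * u / (3 * m)) * H ^ 2 :=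
        mul_le_mul_of_nonneg_left (hsq ω) (by positivity)
      have hum : (0:ℝ) < m := hm
      calc (q ω - p ω) * (v ω - c) ^ 2
          ≤ (p ω / 2 + u / m + u / (3 * m)) * (v ω - c) ^ 2 := le_trans h1 h2
        _ = 1 / 2 * (p ω * (v ω - c) ^ 2) + (4 * u / (3 * m)) * (v ω - c) ^ 2 := by
            field_simp; ring
        _ ≤ 1 / 2 * (p ω * (v ω - c) ^ 2) + (4 * u / (3 * m)) * H ^ 2 := by linarith
        _ = 1 / 2 * (p ω * (v ω - c) ^ 2) + 1 * (4 * H ^ 2 * u / (3 * m)) := by ring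
    · have hp0 : p ω = 0 := le_antisymm (not_lt.mp hp) (hpnonneg ω)
      rw [if_neg hp, hp0] at hcl
      rw [if_neg hp, hp0]
      have : Real.sqrt (2 * 0 * u / m) = 0 := by norm_num
      rw [this] at hcl
      have hq0 : q ω = 0 := by
        have h3 : (0:ℝ) < 3 * m := by linarith
        rw [show (0:ℝ) + 0 * u / (3 * m) = 0 by simp] at hcl
        have := abs_nonneg (q ω - 0)
        have habs0 : |q ω - 0| = 0 := le_antisymm hcl this
        simpa using abs_eq_zero.mp habs0
      rw [hq0]
      norm_num
  have hsplit : ∑ ω, q ω * (v ω - c) ^ 2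
      = ∑ ω, p ω * (v ω - c) ^ 2 + ∑ ω, (q ω - p ω) * (v ω - c) ^ 2 := by
    rw [← Finset.sum_add_distrib]
    exact Finset.sum_congr rfl fun ω _ => by ring
  have hsum : ∑ ω, (q ω - p ω) * (v ω - c) ^ 2
      ≤ 1 / 2 * probVar p v
        + ((Finset.univ.filter (fun ω => 0 < p ω)).card : ℝ) * (4 * H ^ 2 * u / (3 * m)) := by
    calc ∑ ω, (q ω - p ω) * (v ω - c) ^ 2
        ≤ ∑ ω, (1 / 2 * (p ω * (v ω - c) ^ 2)
            + (if 0 < p ω then (1:ℝ) else 0) * (4 * H ^ 2 * u / (3 * m))) :=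
          Finset.sum_le_sum fun ω _ => hpt ω
      _ = 1 / 2 * ∑ ω, p ω * (v ω - c) ^ 2
            + (∑ ω, if 0 < p ω then (1:ℝ) else 0) * (4 * H ^ 2 * u / (3 * m)) := by
          rw [Finset.sum_add_distrib, ← Finset.mul_sum, ← Finset.sum_mul]
      _ = 1 / 2 * probVar p v
            + ((Finset.univ.filter (fun ω => 0 < p ω)).card : ℝ)
              * (4 * H ^ 2 * u / (3 * m)) := by
          rw [hvarp, Finset.sum_boole]
  have hfin : ((Finset.univ.filter (fun ω => 0 < p ω)).card : ℝ)
      * (4 * H ^ 2 * u / (3 * m))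
      = 4 * (Finset.univ.filter (fun ω => 0 < p ω)).card * H ^ 2 * u / (3 * m) := by
    ring
  linarith [hvarq, hsplit ▸ hvarq, hsum, hvarp]
end
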